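/- Let Q be an n×s matrix and r a 1×s row vector with entries in [0,1]. Define p̂ by p̂_j = min over k of σ(q_{jk}, r_k), where σ(q, r) = r if q > r and σ(q, r) = 1 otherwise. If the solution set S(Q, r) = { p ∈ [0,1]^n : p∘Q = r } is nonempty, then p̂ ∈ S(Q, r) and p ≤ p̂ (componentwise) for every p ∈ S(Q, r); i.e., p̂ is the maximum solution. -/

import Mathlib

/-!
`σ(q, r)` is the Gödel implication `q ⇒ r`, the residuum of `min`: for `x ≤ 1`,
`min x q ≤ r ↔ x ≤ (q ⇒ r)`. Hence `p ∘ Q ≤ r` holds exactly when `p ≤ p̂`, so every solution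
lies below `p̂`, and `p̂ ∘ Q ≤ r`. Monotonicity of `∘` applied to any solution `p ≤ p̂` gives
`r = p ∘ Q ≤ p̂ ∘ Q`, so `p̂` is itself a solution.
-/

open Finset

namespace MaxMinEquation

variable {α ι κ : Type*} [LinearOrder α]

/-- The paper's `σ(q, r)`, with `b` in place of the top value `1`. -/
def godelImp (b q r : α) : α := if r < q then r else b

theorem le_godelImp_iff {b q r x : α} (hx : x ≤ b) : x ≤ godelImp b q r ↔ min x q ≤ r := by
  unfold godelImp
  split_ifs with h
  · exact ⟨fun hxr => min_le_of_left_le hxr,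
      fun hmin => (min_le_iff.mp hmin).resolve_right (not_le.mpr h)⟩
  · exact ⟨fun _ => min_le_of_right_le (not_lt.mp h), fun _ => hx⟩

theorem le_godelImp {b q r : α} (hr : r ≤ b) : r ≤ godelImp b q r := by
  unfold godelImp
  split_ifs
  exacts [le_rfl, hr]

theorem godelImp_le {b q r : α} (hr : r ≤ b) : godelImp b q r ≤ b := by
  unfold godelImp
  split_ifs
  exacts [hr, le_rfl]

section Comp

variable [Fintype ι] [Nonempty ι]

def comp (p : ι → α) (Q : ι → κ → α) (k : κ) : α :=
  univ.sup' univ_nonempty fun j => min (p j) (Q j k)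

theorem comp_le_iff {p : ι → α} {Q : ι → κ → α} {k : κ} {a : α} :
    comp p Q k ≤ a ↔ ∀ j, min (p j) (Q j k) ≤ a := by
  simp [comp, sup'_le_iff]

theorem comp_mono {p p' : ι → α} (h : p ≤ p') (Q : ι → κ → α) (k : κ) :
    comp p Q k ≤ comp p' Q k :=
  sup'_mono_fun fun j _ => min_le_min_right _ (h j)

end Comp

section MaxSol

variable [Fintype κ] [Nonempty κ]

/-- The paper's `p̂`. -/
def maxSol (b : α) (Q : ι → κ → α) (r : κ → α) (j : ι) : α :=
  univ.inf' univ_nonempty fun k => godelImp b (Q j k) (r k)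

theorem le_maxSol_iff {b x : α} {Q : ι → κ → α} {r : κ → α} {j : ι} (hx : x ≤ b) :
    x ≤ maxSol b Q r j ↔ ∀ k, min x (Q j k) ≤ r k := by
  simp [maxSol, le_inf'_iff, le_godelImp_iff hx]

theorem maxSol_le {b : α} {Q : ι → κ → α} {r : κ → α} (hr : ∀ k, r k ≤ b) (j : ι) :
    maxSol b Q r j ≤ b :=
  (inf'_le _ (mem_univ (Classical.arbitrary κ))).trans (godelImp_le (hr _))

theorem le_maxSol {a b : α} {Q : ι → κ → α} {r : κ → α} (hr : ∀ k, a ≤ r k ∧ r k ≤ b)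
    (j : ι) : a ≤ maxSol b Q r j :=
  le_inf' _ _ fun k _ => (hr k).1.trans (le_godelImp (hr k).2)

end MaxSol

variable [Fintype ι] [Nonempty ι] [Fintype κ] [Nonempty κ]

theorem le_maxSol_of_comp_le {b : α} {p : ι → α} {Q : ι → κ → α} {r : κ → α}
    (hp : ∀ j, p j ≤ b) (h : ∀ k, comp p Q k ≤ r k) : p ≤ maxSol b Q r :=
  fun j => (le_maxSol_iff (hp j)).mpr fun k => comp_le_iff.mp (h k) j

theorem comp_maxSol_le {b : α} {Q : ι → κ → α} {r : κ → α} (hr : ∀ k, r k ≤ b) (k : κ) :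
    comp (maxSol b Q r) Q k ≤ r k :=
  comp_le_iff.mpr fun j => (le_maxSol_iff (maxSol_le hr j)).mp le_rfl k

theorem comp_maxSol_eq {b : α} {p : ι → α} {Q : ι → κ → α} {r : κ → α}
    (hr : ∀ k, r k ≤ b) (hp : ∀ j, p j ≤ b) (hpQ : ∀ k, comp p Q k = r k) (k : κ) :
    comp (maxSol b Q r) Q k = r k := by
  refine (comp_maxSol_le hr k).antisymm ?_
  calc r k = comp p Q k := (hpQ k).symm
    _ ≤ comp (maxSol b Q r) Q k :=
      comp_mono (le_maxSol_of_comp_le hp fun k => (hpQ k).le) Q k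

end MaxMinEquation

open MaxMinEquation in
theorem stmt_12_general (n s : ℕ) (Q : Matrix (Fin (n+1)) (Fin (s+1)) ℝ) (r : Fin (s+1) → ℝ)
    (hr : ∀ k, r k ∈ Set.Icc (0:ℝ) 1)
    (phat : Fin (n+1) → ℝ)
    (hphat : ∀ j, phat j =
      Finset.univ.inf' Finset.univ_nonempty fun k => if r k < Q j k then r k else 1)
    (hne : ∃ p : Fin (n+1) → ℝ, (∀ j, p j ∈ Set.Icc (0:ℝ) 1) ∧
      ∀ k, (Finset.univ.sup' Finset.univ_nonempty fun j => min (p j) (Q j k)) = r k) :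
    ((∀ j, phat j ∈ Set.Icc (0:ℝ) 1) ∧
      ∀ k, (Finset.univ.sup' Finset.univ_nonempty fun j => min (phat j) (Q j k)) = r k) ∧
    ∀ p : Fin (n+1) → ℝ, (∀ j, p j ∈ Set.Icc (0:ℝ) 1) →
      (∀ k, (Finset.univ.sup' Finset.univ_nonempty fun j => min (p j) (Q j k)) = r k) →
      ∀ j, p j ≤ phat j := by
  obtain rfl : phat = maxSol 1 Q r := funext hphat
  obtain ⟨p, hp, hpQ⟩ := hne
  have hr1 : ∀ k, r k ≤ 1 := fun k => (hr k).2
  refine ⟨⟨fun j => ⟨le_maxSol hr j, maxSol_le hr1 j⟩, ?_⟩, ?_⟩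
  · exact comp_maxSol_eq hr1 (fun j => (hp j).2) hpQ
  · exact fun p' hp' hp'Q => le_maxSol_of_comp_le (fun j => (hp' j).2) fun k => (hp'Q k).le

theorem stmt_12 (n s : ℕ) (Q : Matrix (Fin (n+1)) (Fin (s+1)) ℝ) (r : Fin (s+1) → ℝ)
    (hQ : ∀ j k, Q j k ∈ Set.Icc (0:ℝ) 1) (hr : ∀ k, r k ∈ Set.Icc (0:ℝ) 1)
    (phat : Fin (n+1) → ℝ)
    (hphat : ∀ j, phat j =
      Finset.univ.inf' Finset.univ_nonempty fun k => if r k < Q j k then r k else 1)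
    (hne : ∃ p : Fin (n+1) → ℝ, (∀ j, p j ∈ Set.Icc (0:ℝ) 1) ∧
      ∀ k, (Finset.univ.sup' Finset.univ_nonempty fun j => min (p j) (Q j k)) = r k) :
    ((∀ j, phat j ∈ Set.Icc (0:ℝ) 1) ∧
      ∀ k, (Finset.univ.sup' Finset.univ_nonempty fun j => min (phat j) (Q j k)) = r k) ∧
    ∀ p : Fin (n+1) → ℝ, (∀ j, p j ∈ Set.Icc (0:ℝ) 1) →
      (∀ k, (Finset.univ.sup' Finset.univ_nonempty fun j => min (p j) (Q j k)) = r k) →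
      ∀ j, p j ≤ phat j :=
  stmt_12_general n s Q r hr phat hphat hne
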